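/- arXiv:2002.06037 — 6 statements merged into one kernel-verified Lean document; each statement's English description precedes it below -/
import Mathlib

section
/- Let g : [0,1] → [0,1] be nondecreasing with g(1) = 1. Then min over θ ∈ [0,1] of (∫₀^θ g(y) dy + 1 - g(θ)) is maximized (over all such g) at value 1 - 1/e, achieved by g(y) = e^{y-1}. -/
/-!
If every value `∫₀^θ g + 1 - g θ` exceeded `1 - 1/e`, the primitive `G θ = ∫₀^θ g` would satisfy
`g < G + 1/e` on `[0,1]`. Since `g` is nondecreasing, the right difference quotients of `G` are
bounded by `g`, so `G' ≤ G + 1/e` with `G 0 = 0`, and Grönwall's inequality gives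
`G 1 ≤ (e - 1)/e = 1 - 1/e`; but the value at `θ = 1` is exactly `G 1`. The exponential
`e^{y-1}` solves `G' = G + 1/e` and makes every value equal to `1 - 1/e`.
-/

open Set Filter Topology intervalIntegral

theorem integral_exp_sub_one_add_one_sub_exp (θ : ℝ) :
    (∫ y in (0:ℝ)..θ, Real.exp (y - 1)) + 1 - Real.exp (θ - 1) = 1 - 1 / Real.exp 1 := by
  simp only [integral_comp_sub_right, integral_exp, zero_sub, Real.exp_neg, one_div]
  ring

namespace MonotoneOn

variable {g : ℝ → ℝ} {a b : ℝ}

theorem intervalIntegrable_of_mem_Icc (hg : MonotoneOn g (Icc a b)) {x z : ℝ}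
    (hx : x ∈ Icc a b) (hz : z ∈ Icc a b) : IntervalIntegrable g MeasureTheory.volume x z :=
  (hg.mono (uIcc_subset_Icc hx hz)).intervalIntegrable

theorem continuousOn_primitive (hg : MonotoneOn g (Icc a b)) (hab : a ≤ b) :
    ContinuousOn (fun x => ∫ y in a..x, g y) (Icc a b) := by
  simpa [uIcc_of_le hab] using
    continuousOn_primitive_interval (a := a) (b := b) (μ := MeasureTheory.volume)
      (by simpa [uIcc_of_le hab] using hg.integrableOn_isCompact isCompact_Icc)

theorem slope_primitive_le (hg : MonotoneOn g (Icc a b)) {x z : ℝ} (hx : a ≤ x) (hxz : x < z)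
    (hz : z ≤ b) : (z - x)⁻¹ * ((∫ y in a..z, g y) - ∫ y in a..x, g y) ≤ g z := by
  have hxI : x ∈ Icc a b := ⟨hx, hxz.le.trans hz⟩
  have hzI : z ∈ Icc a b := ⟨hx.trans hxz.le, hz⟩
  have haI : a ∈ Icc a b := ⟨le_rfl, hx.trans hxI.2⟩
  have hdiff : (∫ y in a..z, g y) - ∫ y in a..x, g y = ∫ y in x..z, g y :=
    integral_interval_sub_left (hg.intervalIntegrable_of_mem_Icc haI hzI)
      (hg.intervalIntegrable_of_mem_Icc haI hxI)
  have hle : (∫ y in x..z, g y) ≤ (z - x) * g z := by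
    simpa using integral_mono_on hxz.le (hg.intervalIntegrable_of_mem_Icc hxI hzI)
      intervalIntegrable_const fun t ht => hg ⟨hx.trans ht.1, ht.2.trans hz⟩ hzI ht.2
  rw [hdiff, inv_mul_le_iff₀ (sub_pos.2 hxz)]
  exact hle

theorem primitive_le_gronwallBound (hg : MonotoneOn g (Icc a b)) (hab : a ≤ b) {K ε : ℝ}
    (hbound : ∀ x ∈ Icc a b, g x ≤ K * (∫ y in a..x, g y) + ε) :
    ∀ x ∈ Icc a b, ∫ y in a..x, g y ≤ gronwallBound 0 K ε (x - a) := by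
  set G : ℝ → ℝ := fun x => ∫ y in a..x, g y
  have hG : ContinuousOn G (Icc a b) := hg.continuousOn_primitive hab
  refine le_gronwallBound_of_liminf_deriv_right_le (f' := fun x => K * G x + ε) hG ?_
    (by simp) fun _ _ => le_rfl
  intro x hx r hr
  have hIoc : Ioc x b ∈ 𝓝[>] x := Ioc_mem_nhdsGT hx.2
  have hGx : Tendsto G (𝓝[>] x) (𝓝 (G x)) :=
    ((hG x (Ico_subset_Icc_self hx)).mono_of_mem_nhdsWithin (Icc_mem_nhdsGT_of_mem hx)).tendsto
  have hlt : ∀ᶠ z in 𝓝[>] x, K * G z + ε < r :=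
    ((continuous_const.mul continuous_id).add continuous_const |>.tendsto (G x) |>.comp hGx
      |>.eventually (gt_mem_nhds hr))
  refine (hlt.and hIoc).mono (fun z ⟨hzr, hzI⟩ => ?_) |>.frequently
  exact (hg.slope_primitive_le hx.1 hzI.1 hzI.2).trans_lt
    ((hbound z ⟨hx.1.trans hzI.1.le, hzI.2⟩).trans_lt hzr)

end MonotoneOn

theorem gronwallBound_zero_one_inv_exp_one :
    gronwallBound 0 1 (1 / Real.exp 1) 1 = 1 - 1 / Real.exp 1 := by
  rw [gronwallBound_of_K_ne_0 one_ne_zero]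
  field_simp
  simp

/-- Over all nondecreasing `g : [0,1] → [0,1]` with `g 1 = 1`, the quantity
`min_{θ∈[0,1]} (∫₀^θ g(y) dy + 1 - g(θ))` is maximized at value `1 - 1/e`,
achieved by `g(y) = e^{y-1}`: the exponential choice attains value `1 - 1/e` at every
`θ ∈ [0,1]`, while for any admissible `g` some `θ ∈ [0,1]` gives value at most `1 - 1/e`. -/
theorem stmt_2 :
    (∀ θ ∈ Set.Icc (0:ℝ) 1,
        (∫ y in (0:ℝ)..θ, Real.exp (y - 1)) + 1 - Real.exp (θ - 1) = 1 - 1 / Real.exp 1) ∧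
    (∀ g : ℝ → ℝ, MonotoneOn g (Set.Icc (0:ℝ) 1) →
        (∀ y ∈ Set.Icc (0:ℝ) 1, g y ∈ Set.Icc (0:ℝ) 1) → g 1 = 1 →
        ∃ θ ∈ Set.Icc (0:ℝ) 1,
          (∫ y in (0:ℝ)..θ, g y) + 1 - g θ ≤ 1 - 1 / Real.exp 1) := by
  refine ⟨fun θ _ => integral_exp_sub_one_add_one_sub_exp θ, fun g hg _ hg1 => ?_⟩
  by_contra! hcon
  have hbound : ∀ x ∈ Icc (0:ℝ) 1, g x ≤ 1 * (∫ y in (0:ℝ)..x, g y) + 1 / Real.exp 1 :=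
    fun x hx => by linarith [hcon x hx]
  have hG1 := hg.primitive_le_gronwallBound zero_le_one hbound 1 ⟨zero_le_one, le_rfl⟩
  rw [sub_zero, gronwallBound_zero_one_inv_exp_one] at hG1
  linarith [hcon 1 ⟨zero_le_one, le_rfl⟩]
end

section
/- Suppose α_u and α_v are nonnegative random variables (functions of a uniformly random y ∈ [0,1]) with α_u(y) ≥ e^{y-1}·w whenever y < θ, and α_v(y) ≥ (1 - e^{θ-1})·w for all y ∈ [0,1], where w ≥ 0 and θ ∈ [0,1]. Then E_y[α_u(y) + α_v(y)] ≥ (1 - 1/e)·w. -/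
open MeasureTheory

/-- If `αu`, `αv` are nonnegative (integrable) random variables of a uniform `y ∈ [0,1]`
with `αu y ≥ e^{y-1}·w` whenever `y < θ`, and `αv y ≥ (1 - e^{θ-1})·w` for all `y ∈ [0,1]`,
where `w ≥ 0` and `θ ∈ [0,1]`, then `E[αu + αv] ≥ (1 - 1/e)·w`. -/
theorem stmt_4 (w θ : ℝ) (hw : 0 ≤ w) (hθ : θ ∈ Set.Icc (0:ℝ) 1)
    (αu αv : ℝ → ℝ)
    (hu0 : ∀ y, 0 ≤ αu y) (hv0 : ∀ y, 0 ≤ αv y)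
    (hu : ∀ y ∈ Set.Icc (0:ℝ) 1, y < θ → Real.exp (y - 1) * w ≤ αu y)
    (hv : ∀ y ∈ Set.Icc (0:ℝ) 1, (1 - Real.exp (θ - 1)) * w ≤ αv y)
    (hIu : IntegrableOn αu (Set.Icc (0:ℝ) 1))
    (hIv : IntegrableOn αv (Set.Icc (0:ℝ) 1)) :
    (1 - 1 / Real.exp 1) * w ≤ ∫ y in Set.Icc (0:ℝ) 1, (αu y + αv y) := by
  obtain ⟨hθ0, hθ1⟩ := hθ
  set g : ℝ → ℝ := fun y => Real.exp (y - 1) * w with hg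
  have hgc : Continuous g := by continuity
  have hgI : IntegrableOn g (Set.Icc (0:ℝ) 1) :=
    hgc.continuousOn.integrableOn_compact isCompact_Icc
  have hindI : IntegrableOn ((Set.Iio θ).indicator g) (Set.Icc (0:ℝ) 1) :=
    hgI.indicator measurableSet_Iio
  have hsplit : ∫ y in Set.Icc (0:ℝ) 1, (αu y + αv y)
      = (∫ y in Set.Icc (0:ℝ) 1, αu y) + ∫ y in Set.Icc (0:ℝ) 1, αv y :=
    integral_add hIu hIv
  -- bound on αv
  have hv' : (1 - Real.exp (θ - 1)) * w ≤ ∫ y in Set.Icc (0:ℝ) 1, αv y := by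
    have := setIntegral_mono_on (integrableOn_const (by simp) enorm_ne_top)
      hIv measurableSet_Icc (fun y hy => hv y hy)
    simpa [Real.volume_Icc] using this
  -- bound on αu
  have hu' : (Real.exp (θ - 1) - Real.exp (0 - 1)) * w ≤ ∫ y in Set.Icc (0:ℝ) 1, αu y := by
    have hle : ∀ y ∈ Set.Icc (0:ℝ) 1, (Set.Iio θ).indicator g y ≤ αu y := by
      intro y hy
      by_cases h : y < θ
      · simpa [Set.indicator_of_mem, h] using hu y hy h
      · simp [Set.indicator_of_notMem, h, hu0 y]
    have hmono := setIntegral_mono_on hindI hIu measurableSet_Icc hle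
    have hcalc : ∫ y in Set.Icc (0:ℝ) 1, (Set.Iio θ).indicator g y
        = (Real.exp (θ - 1) - Real.exp (0 - 1)) * w := by
      rw [setIntegral_indicator measurableSet_Iio]
      have hset : Set.Icc (0:ℝ) 1 ∩ Set.Iio θ = Set.Ico 0 θ := by
        ext x
        simp only [Set.mem_inter_iff, Set.mem_Icc, Set.mem_Iio, Set.mem_Ico]
        constructor
        · rintro ⟨⟨h1, _⟩, h3⟩; exact ⟨h1, h3⟩
        · rintro ⟨h1, h2⟩; exact ⟨⟨h1, le_trans (le_of_lt h2) hθ1⟩, h2⟩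
      rw [hset, integral_Ico_eq_integral_Ioo, ← integral_Ioc_eq_integral_Ioo,
        ← intervalIntegral.integral_of_le hθ0]
      rw [intervalIntegral.integral_mul_const]
      have : ∫ y in (0:ℝ)..θ, Real.exp (y - 1) = Real.exp (θ - 1) - Real.exp (0 - 1) := by
        rw [intervalIntegral.integral_comp_sub_right (fun x => Real.exp x) 1,
          integral_exp]
      rw [this]
    linarith [hmono, hcalc ▸ hmono]
  have hexp : Real.exp (0 - 1) = 1 / Real.exp 1 := by
    rw [show (0:ℝ) - 1 = -1 by ring, Real.exp_neg, inv_eq_one_div]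
  rw [hexp] at hu'
  rw [hsplit]
  nlinarith [hu', hv']
end

section
/- Let G = (V, E, w) be an edge-weighted graph and suppose a randomized algorithm, parameterized by a random vector y, outputs a matching M(y). If there exist nonnegative random variables (α_u)_{u∈V} such that (1) for every realization of y, Σ_{u∈V} α_u = Σ_{(u,v)∈M(y)} w_{uv}, and (2) for every edge (u,v) in a fixed maximum-weight matching M*, E_y[α_u + α_v] ≥ r·w_{uv}, then E_y[weight of M(y)] ≥ r·(weight of M*). -/
/-!
Put `f u = E[α u]`. By (1) and linearity of expectation, `E[w(M)] = ∑_u f u`. Since the edges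
of `M*` have pairwise distinct endpoints and `f ≥ 0`, `∑_{(u,v) ∈ M*} (f u + f v) ≤ ∑_u f u`,
while by (2) the left side is at least `r · w(M*)`.
-/

open MeasureTheory Finset

def IsPairMatching {V : Type*} (S : Finset (V × V)) : Prop :=
  (∀ p ∈ S, ∀ q ∈ S, p ≠ q → p.1 ≠ q.1 ∧ p.1 ≠ q.2 ∧ p.2 ≠ q.1 ∧ p.2 ≠ q.2) ∧
    ∀ p ∈ S, p.1 ≠ p.2

namespace IsPairMatching

variable {V : Type*} {S : Finset (V × V)}

lemma injOn_fst (hS : IsPairMatching S) : Set.InjOn Prod.fst (S : Set (V × V)) :=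
  fun p hp q hq h => by_contra fun hne => (hS.1 p hp q hq hne).1 h

lemma injOn_snd (hS : IsPairMatching S) : Set.InjOn Prod.snd (S : Set (V × V)) :=
  fun p hp q hq h => by_contra fun hne => (hS.1 p hp q hq hne).2.2.2 h

lemma disjoint_image_fst_snd [DecidableEq V] (hS : IsPairMatching S) :
    Disjoint (S.image Prod.fst) (S.image Prod.snd) := by
  rw [disjoint_left]
  rintro u hu₁ hu₂
  obtain ⟨p, hp, rfl⟩ := mem_image.mp hu₁
  obtain ⟨q, hq, hqp⟩ := mem_image.mp hu₂
  by_cases hpq : p = q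
  · subst hpq
    exact hS.2 p hp hqp.symm
  · exact (hS.1 p hp q hq hpq).2.1 hqp.symm

lemma sum_endpoints_le_sum {M : Type*} [AddCommMonoid M] [PartialOrder M]
    [IsOrderedAddMonoid M] [Fintype V] (hS : IsPairMatching S) {f : V → M} (hf : ∀ u, 0 ≤ f u) :
    ∑ p ∈ S, (f p.1 + f p.2) ≤ ∑ u, f u := by
  classical
  calc ∑ p ∈ S, (f p.1 + f p.2)
      = ∑ u ∈ S.image Prod.fst, f u + ∑ u ∈ S.image Prod.snd, f u := by
        rw [sum_add_distrib, sum_image fun p hp q hq => hS.injOn_fst hp hq,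
          sum_image fun p hp q hq => hS.injOn_snd hp hq]
    _ = ∑ u ∈ S.image Prod.fst ∪ S.image Prod.snd, f u :=
        (sum_union hS.disjoint_image_fst_snd).symm
    _ ≤ ∑ u, f u := sum_le_univ_sum_of_nonneg hf

end IsPairMatching

theorem stmt_5_general {V : Type*} [Fintype V] {Ω : Type*} [MeasurableSpace Ω]
    (μ : Measure Ω)
    (w : V × V → ℝ)
    (M : Ω → Finset (V × V))
    (α : V → Ω → ℝ) (hα : ∀ u ω, 0 ≤ α u ω) (hint : ∀ u, Integrable (α u) μ)
    (h1 : ∀ ω, ∑ u : V, α u ω = ∑ p ∈ M ω, w p)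
    (Mstar : Finset (V × V))
    (hstar : ∀ p ∈ Mstar, ∀ q ∈ Mstar, p ≠ q →
        p.1 ≠ q.1 ∧ p.1 ≠ q.2 ∧ p.2 ≠ q.1 ∧ p.2 ≠ q.2)
    (hstarloop : ∀ p ∈ Mstar, p.1 ≠ p.2)
    (r : ℝ)
    (h2 : ∀ p ∈ Mstar, r * w p ≤ ∫ ω, (α p.1 ω + α p.2 ω) ∂μ) :
    r * ∑ p ∈ Mstar, w p ≤ ∫ ω, (∑ p ∈ M ω, w p) ∂μ := by
  set f : V → ℝ := fun u => ∫ ω, α u ω ∂μ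
  have hf : ∀ u, 0 ≤ f u := fun u => integral_nonneg (hα u)
  have h_expected_weight : ∫ ω, (∑ p ∈ M ω, w p) ∂μ = ∑ u, f u := by
    simp_rw [← h1]
    exact integral_finsetSum _ fun u _ => hint u
  calc r * ∑ p ∈ Mstar, w p ≤ ∑ p ∈ Mstar, (f p.1 + f p.2) := by
        rw [mul_sum]
        exact sum_le_sum fun p hp => (h2 p hp).trans_eq (integral_add (hint p.1) (hint p.2))
    _ ≤ ∑ u, f u := IsPairMatching.sum_endpoints_le_sum ⟨hstar, hstarloop⟩ hf
    _ = ∫ ω, (∑ p ∈ M ω, w p) ∂μ := h_expected_weight.symm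

/-- Randomized primal–dual lemma. Suppose a randomized algorithm (randomness `ω ∼ μ`)
outputs a matching `M ω` in an edge-weighted graph with nonnegative weights `w`, and there
are nonnegative (integrable) random variables `α u` such that (1) for every realization,
`∑_u α u = ∑_{p ∈ M ω} w p`, and (2) for every edge `p` of a fixed maximum-weight matching
`Mstar`, `E[α p.1 + α p.2] ≥ r · w p`. Then `E[weight of M] ≥ r · (weight of Mstar)`. -/
theorem stmt_5 {V : Type*} [Fintype V] {Ω : Type*} [MeasurableSpace Ω]
    (μ : Measure Ω) [IsProbabilityMeasure μ]
    (w : V × V → ℝ) (hw : ∀ p, 0 ≤ w p)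
    (M : Ω → Finset (V × V))
    (hM : ∀ ω, ∀ p ∈ M ω, ∀ q ∈ M ω, p ≠ q →
        p.1 ≠ q.1 ∧ p.1 ≠ q.2 ∧ p.2 ≠ q.1 ∧ p.2 ≠ q.2)
    (hMloop : ∀ ω, ∀ p ∈ M ω, p.1 ≠ p.2)
    (α : V → Ω → ℝ) (hα : ∀ u ω, 0 ≤ α u ω) (hint : ∀ u, Integrable (α u) μ)
    (h1 : ∀ ω, ∑ u : V, α u ω = ∑ p ∈ M ω, w p)
    (Mstar : Finset (V × V))
    (hstar : ∀ p ∈ Mstar, ∀ q ∈ Mstar, p ≠ q →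
        p.1 ≠ q.1 ∧ p.1 ≠ q.2 ∧ p.2 ≠ q.1 ∧ p.2 ≠ q.2)
    (hstarloop : ∀ p ∈ Mstar, p.1 ≠ p.2)
    (r : ℝ)
    (h2 : ∀ p ∈ Mstar, r * w p ≤ ∫ ω, (α p.1 ω + α p.2 ω) ∂μ) :
    r * ∑ p ∈ Mstar, w p ≤ ∫ ω, (∑ p ∈ M ω, w p) ∂μ :=
  stmt_5_general μ w M α hα hint h1 Mstar hstar hstarloop r h2
end

section
/- In the weighted Ranking algorithm with g(y) = e^{y-1}: fix edge (u,v) ∈ E with marginal rank θ, and the ranks of all left vertices other than u. If y_u < θ then the gain of u satisfies α_u ≥ g(y_u)·w_{uv}. -/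
/-- Perturbed weight of a pair `(u, v)` under ranks `y`, with perturbation
function `g(t) = e^{t-1}`: namely `(1 - e^{y u - 1}) * w u v`. -/
noncomputable def perturbedWeight {L R : Type*} (w : L → R → ℝ) (y : L → ℝ) (p : L × R) : ℝ :=
  (1 - Real.exp (y p.1 - 1)) * w p.1 p.2

/-- One probing step: the pair `p` is added to the current matching `M` iff it is an edge
and both of its endpoints are currently unmatched. -/
def probeStep {L R : Type*} [DecidableEq L] [DecidableEq R]
    (E : Finset (L × R)) (M : List (L × R)) (p : L × R) : List (L × R) :=
  if p ∈ E ∧ ∀ q ∈ M, q.1 ≠ p.1 ∧ q.2 ≠ p.2 then p :: M else M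

/-- The matching produced by probing the pairs in the list `P` in order, starting from the
empty matching. -/
def greedyMatching {L R : Type*} [DecidableEq L] [DecidableEq R]
    (E : Finset (L × R)) (P : List (L × R)) : List (L × R) :=
  P.foldl (probeStep E) []

/-- `P` is a valid probing order for the weighted Ranking algorithm with ranks `y`:
it lists every pair exactly once, in descending order of perturbed weight. -/
def IsProbeOrder {L R : Type*} [Fintype L] [Fintype R]
    (w : L → R → ℝ) (y : L → ℝ) (P : List (L × R)) : Prop :=
  P.Nodup ∧ (∀ p : L × R, p ∈ P) ∧
    P.Pairwise (fun p q => perturbedWeight w y q ≤ perturbedWeight w y p)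

/-- The weight of the edge that `u` is matched to in the matching `M` (0 if unmatched). -/
noncomputable def matchedWeight {L R : Type*} [DecidableEq L] (w : L → R → ℝ)
    (M : List (L × R)) (u : L) : ℝ :=
  match M.find? (fun q => decide (q.1 = u)) with
  | some q => w q.1 q.2
  | none => 0

/-- The gain `α_u` of a left vertex `u`: `g(y u) · w u v'` where `v'` is `u`'s partner in
`M` (0 if `u` is unmatched), with `g(t) = e^{t-1}`. -/
noncomputable def gainL {L R : Type*} [DecidableEq L] (w : L → R → ℝ) (y : L → ℝ)
    (M : List (L × R)) (u : L) : ℝ :=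
  match M.find? (fun q => decide (q.1 = u)) with
  | some q => Real.exp (y u - 1) * w q.1 q.2
  | none => 0

/-- The gain `α_v` of a right vertex `v`: `(1 - g(y u')) · w u' v` where `u'` is `v`'s
partner in `M` (0 if `v` is unmatched), with `g(t) = e^{t-1}`. -/
noncomputable def gainR {L R : Type*} [DecidableEq R] (w : L → R → ℝ) (y : L → ℝ)
    (M : List (L × R)) (v : R) : ℝ :=
  match M.find? (fun q => decide (q.2 = v)) with
  | some q => (1 - Real.exp (y q.1 - 1)) * w q.1 q.2
  | none => 0

/-- First half of Lemma 3: fix an edge `(u, v) ∈ E` with marginal rank `θ` and the ranks of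
all left vertices other than `u`. If `y_u < θ` then the gain of `u` satisfies
`α_u ≥ g(y_u) · w u v`, where `g(t) = e^{t-1}`. -/
theorem stmt_11 {L R : Type*} [Fintype L] [Fintype R] [DecidableEq L] [DecidableEq R]
    (w : L → R → ℝ) (hw : ∀ a b, 0 ≤ w a b) (E : Finset (L × R))
    (u : L) (v : R) (huv : (u, v) ∈ E)
    (y : L → ℝ) (hy : ∀ x, y x ∈ Set.Icc (0:ℝ) 1)
    (θ : ℝ) (hθ : θ ∈ Set.Icc (0:ℝ) 1)
    (hmarginal : ∀ s ∈ Set.Icc (0:ℝ) 1, ∀ Q : List (L × R),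
      IsProbeOrder w (Function.update y u s) Q →
      (w u v ≤ matchedWeight w (greedyMatching E Q) u ↔ s < θ))
    (t : ℝ) (ht : t ∈ Set.Icc (0:ℝ) 1) (htθ : t < θ)
    (P : List (L × R)) (hP : IsProbeOrder w (Function.update y u t) P) :
    Real.exp (t - 1) * w u v ≤
      gainL w (Function.update y u t) (greedyMatching E P) u := by
  have h := (hmarginal t ht P hP).mpr htθ
  unfold gainL
  unfold matchedWeight at h
  cases hfind : (greedyMatching E P).find? (fun q => decide (q.1 = u)) with
  | none =>
      simp [hfind] at h ⊢
      have := hw u v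
      have hwuv : w u v = 0 := le_antisymm h this
      simp [hwuv]
  | some q =>
      simp [hfind] at h ⊢
      have hq : q.1 = u := by
        have := List.find?_some hfind
        simpa using this
      rw [hq] at h ⊢
      exact mul_le_mul_of_nonneg_left h (le_of_lt (Real.exp_pos _))
end

section
/- In the weighted Ranking algorithm with g(y) = e^{y-1}: fix edge (u,v) ∈ E with marginal rank θ, and the ranks of all left vertices other than u. If y_u ∈ [θ, 1], then v is matched and its gain satisfies α_v ≥ (1 - g(θ))·w_{uv}. -/
namespace List

variable {α : Type*}

theorem filter_lt_prefix_of_pairwise (f : α → ℝ) (c : ℝ) :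
    ∀ {l : List α}, l.Pairwise (fun a b => f b ≤ f a) → l.filter (fun a => c < f a) <+: l
  | [], _ => nil_prefix
  | a :: l, h => by
    obtain ⟨ha, hl⟩ := pairwise_cons.mp h
    by_cases hca : c < f a
    · rw [filter_cons_of_pos (by simpa using hca)]
      exact (prefix_cons_inj a).mpr (filter_lt_prefix_of_pairwise f c hl)
    · rw [filter_cons_of_neg (by simpa using hca), filter_eq_nil_iff.mpr]
      · exact nil_prefix
      · intro b hb hcb
        exact hca ((decide_eq_true_iff.mp hcb).trans_le (ha b hb))

theorem exists_sorted_enumeration [Fintype α] [DecidableEq α] (f : α → ℝ) (a : α)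
    {N : List α} (hN : N.Nodup) (hsorted : N.Pairwise (fun x y => f y ≤ f x))
    (ha : ∀ x ∈ N, f a < f x) :
    ∃ M rest : List α, (M ++ a :: rest).Nodup ∧ (∀ x, x ∈ M ++ a :: rest) ∧
      (M ++ a :: rest).Pairwise (fun x y => f y ≤ f x) ∧ N <+ M ∧ ∀ x ∈ M, f a < f x := by
  let r : α → α → Prop := fun x y => f y ≤ f x
  let _ : DecidableRel r := fun x y => inferInstanceAs (Decidable (f y ≤ f x))
  have : Std.Total r := ⟨fun x y => le_total (f y) (f x)⟩
  have : IsTrans α r := ⟨fun _ _ _ h₁ h₂ => h₂.trans h₁⟩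
  let S := (N ++ (Finset.univ \ N.toFinset).toList).insertionSort r
  have hSperm : S.Perm (N ++ (Finset.univ \ N.toFinset).toList) := perm_insertionSort r _
  have hSnodup : S.Nodup := hSperm.nodup_iff.mpr <| nodup_append.mpr
    ⟨hN, Finset.nodup_toList _, by simpa using fun x hx y hy hxy => hy (hxy ▸ hx)⟩
  have hSmem : ∀ x, x ∈ S := fun x =>
    hSperm.mem_iff.mpr (by by_cases hx : x ∈ N <;> simp [hx])
  have hS : S.Pairwise r := pairwise_insertionSort r _
  refine ⟨S.filter (fun x => f a < f x), S.filter (fun x => ¬ f a < f x ∧ x ≠ a),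
    ?_, ?_, ?_, ?_, fun x hx => by simpa using (mem_filter.mp hx).2⟩
  · refine nodup_append.mpr
      ⟨hSnodup.filter _, nodup_cons.mpr ⟨by simp, hSnodup.filter _⟩, ?_⟩
    simp only [mem_filter, mem_cons, decide_eq_true_eq]
    rintro x ⟨-, hx⟩ y (rfl | ⟨-, hy⟩) rfl
    exacts [lt_irrefl _ hx, hy.1 hx]
  · intro x
    by_cases hx : f a < f x
    · simp [hx, hSmem]
    · by_cases hxa : x = a <;> simp [hx, hxa, hSmem, le_of_not_gt hx]
  · refine pairwise_append.mpr ⟨hS.filter _, pairwise_cons.mpr ⟨?_, hS.filter _⟩, ?_⟩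
    · simp only [mem_filter, decide_eq_true_eq, not_lt]
      exact fun y hy => hy.2.1
    · simp only [mem_filter, mem_cons, decide_eq_true_eq, not_lt]
      rintro x ⟨-, hx⟩ y (rfl | ⟨-, hy, -⟩)
      exacts [hx.le, hy.trans hx.le]
  · -- insertion sort is stable
    have hNS : N <+ S := sublist_insertionSort hsorted (sublist_append_left _ _)
    simpa [filter_eq_self.mpr fun x hx => decide_eq_true (ha x hx)]
      using hNS.filter (fun x => f a < f x)

theorem find?_eq_some_of_nodup_map {β : Type*} [DecidableEq β] {f : α → β}
    {l : List α} (hl : (l.map f).Nodup) {a : α} (ha : a ∈ l) :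
    l.find? (fun b => f b = f a) = some a := by
  cases h : l.find? (fun b => f b = f a) with
  | none => simpa using find?_eq_none.mp h a ha
  | some b =>
    rw [inj_on_of_nodup_map hl (mem_of_find?_eq_some h) ha
      (by simpa using find?_some h)]

end List

section Greedy

variable {L R : Type*} [DecidableEq L] [DecidableEq R] (E : Finset (L × R))

theorem subset_foldl_probeStep :
    ∀ (Q : List (L × R)) (M : List (L × R)), M ⊆ Q.foldl (probeStep E) M
  | [], _ => List.Subset.refl _
  | p :: Q, M => by
    refine List.Subset.trans ?_ (subset_foldl_probeStep Q (probeStep E M p))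
    unfold probeStep
    split
    · exact List.subset_cons_self p M
    · exact List.Subset.refl M

theorem mem_or_mem_of_mem_foldl_probeStep {Q M : List (L × R)} {q : L × R}
    (h : q ∈ Q.foldl (probeStep E) M) : q ∈ M ∨ q ∈ Q := by
  induction Q generalizing M with
  | nil => exact Or.inl h
  | cons p Q ih =>
    rcases ih h with h | h
    · unfold probeStep at h
      split at h
      · rcases List.mem_cons.mp h with rfl | h
        exacts [Or.inr List.mem_cons_self, Or.inl h]
      · exact Or.inl h
    · exact Or.inr (List.mem_cons_of_mem p h)

theorem pairwise_foldl_probeStep :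
    ∀ {Q M : List (L × R)}, M.Pairwise (fun a b => a.1 ≠ b.1 ∧ a.2 ≠ b.2) →
      (Q.foldl (probeStep E) M).Pairwise (fun a b => a.1 ≠ b.1 ∧ a.2 ≠ b.2)
  | [], _, h => h
  | p :: Q, M, h => by
    refine pairwise_foldl_probeStep (Q := Q) ?_
    unfold probeStep
    split
    · next hp => exact List.pairwise_cons.mpr ⟨fun b hb => (hp.2 b hb).imp Ne.symm Ne.symm, h⟩
    · exact h

theorem foldl_probeStep_filter_fst_ne {u : L} :
    ∀ {Q M : List (L × R)}, (∀ q ∈ Q.foldl (probeStep E) M, q.1 ≠ u) →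
      Q.foldl (probeStep E) M = (Q.filter (fun p => p.1 ≠ u)).foldl (probeStep E) M
  | [], _, _ => rfl
  | p :: Q, M, h => by
    by_cases hp : p.1 = u
    · have hstep : probeStep E M p = M := by
        unfold probeStep
        refine if_neg fun hfree => h p (subset_foldl_probeStep E Q _ ?_) hp
        rw [probeStep, if_pos hfree]
        exact List.mem_cons_self
      rw [List.filter_cons_of_neg (by simpa using hp), List.foldl_cons, hstep]
      rw [List.foldl_cons, hstep] at h
      exact foldl_probeStep_filter_fst_ne h
    · rw [List.filter_cons_of_pos (by simpa using hp), List.foldl_cons, List.foldl_cons]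
      exact foldl_probeStep_filter_fst_ne h

theorem mem_of_mem_greedyMatching {Q : List (L × R)} {q : L × R}
    (h : q ∈ greedyMatching E Q) : q ∈ Q :=
  (mem_or_mem_of_mem_foldl_probeStep E h).resolve_left List.not_mem_nil

theorem greedyMatching_subset_of_prefix {Q Q' : List (L × R)} (h : Q <+: Q') :
    greedyMatching E Q ⊆ greedyMatching E Q' := by
  obtain ⟨T, rfl⟩ := h
  unfold greedyMatching
  rw [List.foldl_append]
  exact subset_foldl_probeStep E T _

theorem mem_greedyMatching_append_cons {Q Q' : List (L × R)} {p : L × R} (hp : p ∈ E)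
    (hfree : ∀ q ∈ greedyMatching E Q, q.1 ≠ p.1 ∧ q.2 ≠ p.2) :
    p ∈ greedyMatching E (Q ++ p :: Q') := by
  rw [greedyMatching, List.foldl_append, List.foldl_cons]
  refine subset_foldl_probeStep E Q' _ ?_
  rw [probeStep, if_pos ⟨hp, hfree⟩]
  exact List.mem_cons_self

theorem greedyMatching_filter_fst_ne {Q : List (L × R)} {u : L}
    (h : ∀ q ∈ greedyMatching E Q, q.1 ≠ u) :
    greedyMatching E Q = greedyMatching E (Q.filter (fun p => p.1 ≠ u)) :=
  foldl_probeStep_filter_fst_ne E h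

theorem nodup_map_fst_greedyMatching (Q : List (L × R)) :
    ((greedyMatching E Q).map Prod.fst).Nodup :=
  List.pairwise_map.mpr ((pairwise_foldl_probeStep E List.Pairwise.nil).imp And.left)

theorem nodup_map_snd_greedyMatching (Q : List (L × R)) :
    ((greedyMatching E Q).map Prod.snd).Nodup :=
  List.pairwise_map.mpr ((pairwise_foldl_probeStep E List.Pairwise.nil).imp And.right)

theorem matchedWeight_greedyMatching_of_mem (w : L → R → ℝ) {Q : List (L × R)} {u : L}
    {x : R} (h : (u, x) ∈ greedyMatching E Q) :
    matchedWeight w (greedyMatching E Q) u = w u x := by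
  rw [matchedWeight, List.find?_eq_some_of_nodup_map (nodup_map_fst_greedyMatching E Q) h]

theorem gainR_greedyMatching_of_mem (w : L → R → ℝ) (y : L → ℝ) {Q : List (L × R)}
    {q : L × R} {v : R} (h : q ∈ greedyMatching E Q) (hv : q.2 = v) :
    gainR w y (greedyMatching E Q) v = perturbedWeight w y q := by
  subst hv
  rw [gainR, List.find?_eq_some_of_nodup_map (nodup_map_snd_greedyMatching E Q) h]
  rfl

end Greedy

theorem one_sub_exp_sub_one_nonneg {s : ℝ} (hs : s ≤ 1) : 0 ≤ 1 - Real.exp (s - 1) := by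
  linarith [Real.exp_le_one_iff.mpr (by linarith : s - 1 ≤ 0)]

section PerturbedWeight

variable {L R : Type*} [DecidableEq L] (w : L → R → ℝ) (y : L → ℝ) {u : L} {s : ℝ}

@[simp]
theorem perturbedWeight_update_self (x : R) :
    perturbedWeight w (Function.update y u s) (u, x) = (1 - Real.exp (s - 1)) * w u x := by
  simp [perturbedWeight]

theorem perturbedWeight_update_of_ne {p : L × R} (hp : p.1 ≠ u) :
    perturbedWeight w (Function.update y u s) p = perturbedWeight w y p := by
  simp [perturbedWeight, Function.update_of_ne hp]

variable {w y}

theorem lt_of_perturbedWeight_update_lt (hs : s ≤ 1) {x x' : R}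
    (h : perturbedWeight w (Function.update y u s) (u, x) <
      perturbedWeight w (Function.update y u s) (u, x')) : w u x < w u x' := by
  rw [perturbedWeight_update_self, perturbedWeight_update_self] at h
  exact lt_of_mul_lt_mul_left h (one_sub_exp_sub_one_nonneg hs)

theorem pairwise_perturbedWeight_update_filter_fst_ne {t : ℝ} {Q : List (L × R)}
    (hQ : Q.Pairwise fun p q =>
      perturbedWeight w (Function.update y u t) q ≤ perturbedWeight w (Function.update y u t) p) :
    (Q.filter fun p => p.1 ≠ u).Pairwise fun p q =>
      perturbedWeight w (Function.update y u s) q ≤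
        perturbedWeight w (Function.update y u s) p := by
  refine (hQ.filter _).imp_of_mem fun {p q} hp hq hpq => ?_
  have hp : p.1 ≠ u := by simpa using (List.mem_filter.mp hp).2
  have hq : q.1 ≠ u := by simpa using (List.mem_filter.mp hq).2
  simpa [perturbedWeight_update_of_ne w y hp, perturbedWeight_update_of_ne w y hq] using hpq

end PerturbedWeight

theorem exists_one_sub_exp_mul_eq {θ a c : ℝ} (hθ : θ ≤ 1)
    (hc : c ∈ Set.Icc 0 ((1 - Real.exp (θ - 1)) * a)) :
    ∃ s ∈ Set.Icc θ 1, (1 - Real.exp (s - 1)) * a = c := by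
  have hcont : ContinuousOn (fun s => (1 - Real.exp (s - 1)) * a) (Set.Icc θ 1) := by fun_prop
  exact intermediate_value_Icc' hθ hcont (by simpa using hc)

def IsMarginalRank {L R : Type*} [Fintype L] [Fintype R] [DecidableEq L] [DecidableEq R]
    (w : L → R → ℝ) (E : Finset (L × R)) (y : L → ℝ) (u : L) (v : R) (θ : ℝ) : Prop :=
  ∀ s ∈ Set.Icc (0:ℝ) 1, ∀ Q : List (L × R), IsProbeOrder w (Function.update y u s) Q →
    (w u v ≤ matchedWeight w (greedyMatching E Q) u ↔ s < θ)

namespace IsMarginalRank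

variable {L R : Type*} [Fintype L] [Fintype R] [DecidableEq L] [DecidableEq R]
  {w : L → R → ℝ} {E : Finset (L × R)} {y : L → ℝ} {u : L} {v : R} {θ : ℝ}

theorem lt_of_mem_greedyMatching (hmarg : IsMarginalRank w E y u v θ) (hθ : 0 ≤ θ)
    {s : ℝ} (hs : s ∈ Set.Icc θ 1) {Q : List (L × R)}
    (hQ : IsProbeOrder w (Function.update y u s) Q) {x : R}
    (hx : (u, x) ∈ greedyMatching E Q) : w u x < w u v := by
  have h := hmarg s ⟨hθ.trans hs.1, hs.2⟩ Q hQ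
  rw [matchedWeight_greedyMatching_of_mem E w hx] at h
  exact lt_of_not_ge fun hle => hs.1.not_gt (h.mp hle)

theorem exists_mem_greedyMatching_snd_eq (hmarg : IsMarginalRank w E y u v θ) (hθ : 0 ≤ θ)
    (huv : (u, v) ∈ E) {s : ℝ} (hs : s ∈ Set.Icc θ 1) {N : List (L × R)} (hN : N.Nodup)
    (hsorted : N.Pairwise fun p q =>
      perturbedWeight w (Function.update y u s) q ≤ perturbedWeight w (Function.update y u s) p)
    (hmem : ∀ p, p ∈ N ↔ p.1 ≠ u ∧ perturbedWeight w (Function.update y u s) (u, v) <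
      perturbedWeight w (Function.update y u s) p) :
    ∃ q ∈ greedyMatching E N, q.2 = v := by
  obtain ⟨M, rest, hnd, hall, hsort, hNM, hM⟩ := List.exists_sorted_enumeration
    (perturbedWeight w (Function.update y u s)) (u, v) hN hsorted fun p hp => ((hmem p).mp hp).2
  have hQ : IsProbeOrder w (Function.update y u s) (M ++ (u, v) :: rest) := ⟨hnd, hall, hsort⟩
  have hMu : ∀ q ∈ greedyMatching E M, q.1 ≠ u := by
    rintro ⟨_, x⟩ hq rfl
    exact (lt_of_perturbedWeight_update_lt hs.2 (hM _ (mem_of_mem_greedyMatching E hq))).not_gt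
      (hmarg.lt_of_mem_greedyMatching hθ hs hQ
        (greedyMatching_subset_of_prefix E (List.prefix_append _ _) hq))
  have hMN : M.filter (fun p => p.1 ≠ u) = N := by
    have hsub : N.Sublist (M.filter (fun p => p.1 ≠ u)) := by
      have h := hNM.filter (fun p => decide (p.1 ≠ u))
      rwa [List.filter_eq_self.mpr fun p hp => decide_eq_true ((hmem p).mp hp).1] at h
    refine (hsub.eq_of_length_le ?_).symm
    refine ((hnd.sublist (List.sublist_append_left _ _)).filter _).length_le_of_subset ?_
    intro p hp
    obtain ⟨hpM, hpu⟩ := List.mem_filter.mp hp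
    exact (hmem p).mpr ⟨by simpa using hpu, hM p hpM⟩
  by_contra! hv
  have hfree : ∀ q ∈ greedyMatching E M, q.1 ≠ u ∧ q.2 ≠ v := by
    intro q hq
    refine ⟨hMu q hq, hv q ?_⟩
    rwa [greedyMatching_filter_fst_ne E hMu, hMN] at hq
  exact lt_irrefl _ (hmarg.lt_of_mem_greedyMatching hθ hs hQ
    (mem_greedyMatching_append_cons E huv hfree))

theorem fst_ne_of_mem_greedyMatching_filter (hmarg : IsMarginalRank w E y u v θ)
    (hθ : 0 ≤ θ) {t : ℝ} (ht : t ∈ Set.Icc θ 1) {P : List (L × R)}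
    (hP : IsProbeOrder w (Function.update y u t) P) {c : ℝ}
    (hc : perturbedWeight w (Function.update y u t) (u, v) ≤ c) {q : L × R}
    (hq : q ∈ greedyMatching E
      (P.filter fun p => c < perturbedWeight w (Function.update y u t) p)) :
    q.1 ≠ u := by
  obtain ⟨u', x⟩ := q
  intro (hu' : u' = u)
  subst u'
  have hx : c < perturbedWeight w (Function.update y u t) (u, x) := by
    simpa using (List.mem_filter.mp (mem_of_mem_greedyMatching E hq)).2
  exact (lt_of_perturbedWeight_update_lt ht.2 (hc.trans_lt hx)).not_gt
    (hmarg.lt_of_mem_greedyMatching hθ ht hP (greedyMatching_subset_of_prefix E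
      (List.filter_lt_prefix_of_pairwise _ c hP.2.2) hq))

theorem exists_mem_greedyMatching_gt (hmarg : IsMarginalRank w E y u v θ) (hθ : 0 ≤ θ)
    (huv : (u, v) ∈ E) (hw : 0 ≤ w u v) {t : ℝ} (ht : t ∈ Set.Icc θ 1) {P : List (L × R)}
    (hP : IsProbeOrder w (Function.update y u t) P) {c : ℝ}
    (hc₀ : perturbedWeight w (Function.update y u t) (u, v) ≤ c)
    (hc₁ : c ≤ (1 - Real.exp (θ - 1)) * w u v) :
    ∃ q ∈ greedyMatching E P, q.2 = v ∧ c < perturbedWeight w (Function.update y u t) q := by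
  have hc : 0 ≤ c := by
    refine le_trans ?_ hc₀
    rw [perturbedWeight_update_self]
    exact mul_nonneg (one_sub_exp_sub_one_nonneg ht.2) hw
  obtain ⟨s, hs, hsc⟩ := exists_one_sub_exp_mul_eq (ht.1.trans ht.2) ⟨hc, hc₁⟩
  set T := P.filter fun p => c < perturbedWeight w (Function.update y u t) p
  have hTu : ∀ q ∈ greedyMatching E T, q.1 ≠ u :=
    fun q hq => hmarg.fst_ne_of_mem_greedyMatching_filter hθ ht hP hc₀ hq
  have hN_mem : ∀ p, p ∈ T.filter (fun p => p.1 ≠ u) ↔ p.1 ≠ u ∧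
      perturbedWeight w (Function.update y u s) (u, v) <
        perturbedWeight w (Function.update y u s) p := by
    intro p
    rw [perturbedWeight_update_self, hsc, List.mem_filter, List.mem_filter]
    constructor
    · rintro ⟨⟨-, hp⟩, hpu⟩
      have hpu : p.1 ≠ u := by simpa using hpu
      exact ⟨hpu, by simpa [perturbedWeight_update_of_ne w y hpu] using hp⟩
    · rintro ⟨hpu, hp⟩
      exact ⟨⟨hP.2.1 p, by simpa [perturbedWeight_update_of_ne w y hpu] using hp⟩,
        by simpa using hpu⟩
  obtain ⟨q, hq, hqv⟩ := hmarg.exists_mem_greedyMatching_snd_eq hθ huv hs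
    ((hP.1.filter _).filter _)
    (pairwise_perturbedWeight_update_filter_fst_ne (hP.2.2.filter _)) hN_mem
  rw [← greedyMatching_filter_fst_ne E hTu] at hq
  refine ⟨q, greedyMatching_subset_of_prefix E
    (List.filter_lt_prefix_of_pairwise _ c hP.2.2) hq, hqv, ?_⟩
  simpa [T] using (List.mem_filter.mp (mem_of_mem_greedyMatching E hq)).2

end IsMarginalRank

theorem stmt_12_general {L R : Type*} [Fintype L] [Fintype R] [DecidableEq L] [DecidableEq R]
    (w : L → R → ℝ) (hw : ∀ a b, 0 ≤ w a b) (E : Finset (L × R))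
    (u : L) (v : R) (huv : (u, v) ∈ E)
    (y : L → ℝ)
    (θ : ℝ) (hθ : θ ∈ Set.Icc (0:ℝ) 1)
    (hmarginal : ∀ s ∈ Set.Icc (0:ℝ) 1, ∀ Q : List (L × R),
      IsProbeOrder w (Function.update y u s) Q →
      (w u v ≤ matchedWeight w (greedyMatching E Q) u ↔ s < θ))
    (t : ℝ) (ht : t ∈ Set.Icc θ 1)
    (P : List (L × R)) (hP : IsProbeOrder w (Function.update y u t) P) :
    (∃ q ∈ greedyMatching E P, q.2 = v) ∧
      (1 - Real.exp (θ - 1)) * w u v ≤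
        gainR w (Function.update y u t) (greedyMatching E P) v := by
  have hmarg : IsMarginalRank w E y u v θ := hmarginal
  have huv_le : perturbedWeight w (Function.update y u t) (u, v) ≤
      (1 - Real.exp (θ - 1)) * w u v := by
    rw [perturbedWeight_update_self]
    gcongr
    · exact hw u v
    · exact ht.1
  obtain ⟨q, hq, hqv, hq_gt⟩ :=
    hmarg.exists_mem_greedyMatching_gt hθ.1 huv (hw u v) ht hP le_rfl huv_le
  refine ⟨⟨q, hq, hqv⟩, ?_⟩
  rw [gainR_greedyMatching_of_mem E w _ hq hqv]
  by_contra! hlt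
  obtain ⟨q', hq', hq'v, hq'_gt⟩ :=
    hmarg.exists_mem_greedyMatching_gt hθ.1 huv (hw u v) ht hP hq_gt.le hlt.le
  rw [List.inj_on_of_nodup_map (nodup_map_snd_greedyMatching E P) hq' hq (hq'v.trans hqv.symm)]
    at hq'_gt
  exact lt_irrefl _ hq'_gt

/-- Second half of Lemma 3: fix an edge `(u, v) ∈ E` with marginal rank `θ` and the ranks
of all left vertices other than `u`. If `y_u ∈ [θ, 1]` then `v` is matched and its gain
satisfies `α_v ≥ (1 - g(θ)) · w u v`, where `g(t) = e^{t-1}`. -/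
theorem stmt_12 {L R : Type*} [Fintype L] [Fintype R] [DecidableEq L] [DecidableEq R]
    (w : L → R → ℝ) (hw : ∀ a b, 0 ≤ w a b) (E : Finset (L × R))
    (u : L) (v : R) (huv : (u, v) ∈ E)
    (y : L → ℝ) (hy : ∀ x, y x ∈ Set.Icc (0:ℝ) 1)
    (θ : ℝ) (hθ : θ ∈ Set.Icc (0:ℝ) 1)
    (hmarginal : ∀ s ∈ Set.Icc (0:ℝ) 1, ∀ Q : List (L × R),
      IsProbeOrder w (Function.update y u s) Q →
      (w u v ≤ matchedWeight w (greedyMatching E Q) u ↔ s < θ))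
    (t : ℝ) (ht : t ∈ Set.Icc θ 1)
    (P : List (L × R)) (hP : IsProbeOrder w (Function.update y u t) P) :
    (∃ q ∈ greedyMatching E P, q.2 = v) ∧
      (1 - Real.exp (θ - 1)) * w u v ≤
        gainR w (Function.update y u t) (greedyMatching E P) v :=
  stmt_12_general w hw E u v huv y θ hθ hmarginal t ht P hP
end

section
/- Let M₁ and M₂ be matchings in a graph whose symmetric difference forms a path (u₀, v₁, u₁, v₂, u₂, …, with (u_{i-1}, v_i) ∈ M₂ and (v_i, u_i) ∈ M₁) along which the edge weights satisfy w_{u_{i-1} v_i} ≥ w_{v_i u_i} for all i. Then every vertex v_i matched in M₁ is also matched in M₂, to a vertex giving edge weight at least that of its M₁-partner. -/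
/-- A set of pairs is a (bipartite) matching if no two of its pairs share a left or a
right endpoint. -/
def IsPartialMatching {L R : Type*} (M : Finset (L × R)) : Prop :=
  ∀ p ∈ M, ∀ q ∈ M, p ≠ q → p.1 ≠ q.1 ∧ p.2 ≠ q.2

theorem stmt_14_general {L R : Type*}
    (w : L → R → ℝ) (M₁ M₂ : Finset (L × R))
    (n : ℕ) (u : Fin (n + 1) → L) (v : Fin n → R)
    (hM₂ : ∀ i : Fin n, (u i.castSucc, v i) ∈ M₂)
    (hw : ∀ i : Fin n, w (u i.succ) (v i) ≤ w (u i.castSucc) (v i))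
    (hsym : ∀ p : L × R,
        ((p ∈ M₁ ∧ p ∉ M₂) ∨ (p ∈ M₂ ∧ p ∉ M₁)) ↔
          (∃ i : Fin n, p = (u i.castSucc, v i) ∨ p = (u i.succ, v i))) :
    ∀ (a : L) (b : R), (a, b) ∈ M₁ → ∃ a' : L, (a', b) ∈ M₂ ∧ w a b ≤ w a' b := by
  intro a b hab₁
  by_cases hab₂ : (a, b) ∈ M₂
  · exact ⟨a, hab₂, le_rfl⟩
  obtain ⟨i, hi | hi⟩ := (hsym (a, b)).mp (Or.inl ⟨hab₁, hab₂⟩)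
  · exact absurd (hi ▸ hM₂ i) hab₂
  · obtain ⟨rfl, rfl⟩ := Prod.ext_iff.mp hi
    exact ⟨u i.castSucc, hM₂ i, hw i⟩

/-- If the symmetric difference of two matchings `M₁`, `M₂` is an alternating path
`u₀, v₁, u₁, v₂, u₂, …` with `(u_{i-1}, v_i) ∈ M₂`, `(v_i, u_i) ∈ M₁` and
`w_{u_{i-1} v_i} ≥ w_{v_i u_i}` for all `i`, then every right vertex matched in `M₁`
is also matched in `M₂`, to a vertex giving edge weight at least that of its
`M₁`-partner. -/
theorem stmt_14 {L R : Type*} [DecidableEq L] [DecidableEq R]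
    (w : L → R → ℝ) (M₁ M₂ : Finset (L × R))
    (h₁ : IsPartialMatching M₁) (h₂ : IsPartialMatching M₂)
    (n : ℕ) (u : Fin (n + 1) → L) (v : Fin n → R)
    (hM₂ : ∀ i : Fin n, (u i.castSucc, v i) ∈ M₂)
    (hM₁ : ∀ i : Fin n, (u i.succ, v i) ∈ M₁)
    (hw : ∀ i : Fin n, w (u i.succ) (v i) ≤ w (u i.castSucc) (v i))
    (hsym : ∀ p : L × R,
        ((p ∈ M₁ ∧ p ∉ M₂) ∨ (p ∈ M₂ ∧ p ∉ M₁)) ↔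
          (∃ i : Fin n, p = (u i.castSucc, v i) ∨ p = (u i.succ, v i))) :
    ∀ (a : L) (b : R), (a, b) ∈ M₁ → ∃ a' : L, (a', b) ∈ M₂ ∧ w a b ≤ w a' b :=
  stmt_14_general w M₁ M₂ n u v hM₂ hw hsym
end
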